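/- Let (S, ⋆) be a semigroup and suppose S' ⊆ S is a sub-semigroup such that S \ S' is finite and every element of S' is left cancellable in S' (a ⋆ b = a ⋆ b' implies b = b' for a,b,b' ∈ S'). Then for a set A ⊆ S the following are equivalent: (1) there exists an injective sequence (a_n)_{n=1}^∞ in S with FP(a_n)_{n=1}^∞ ⊆ A, where FP(a_n)_{n=1}^∞ = {a_{n_1} ⋆ ⋯ ⋆ a_{n_s} : n_1 < … < n_s}; (2) A ∈ 𝒰 for some non-principal idempotent ultrafilter 𝒰 = 𝒰 ⋆ 𝒰 on S. -/

import Mathlib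

/-!
Non-principal ultrafilters are those finer than the cofinite filter. Left cancellation on a
cofinite set gives every equation `m * c = x` finitely many solutions `c` for almost all `m`, so
the non-principal ultrafilters form a closed subsemigroup of `βS`. Intersecting it with the closed
subsemigroup of ultrafilters containing every tail FP-set of an injective sequence, the
Ellis–Numakura lemma yields the idempotent. Conversely, in Galvin's construction of an FP-set
inside a member of an idempotent ultrafilter, each chosen term can also be removed from the sets
still to be used; for a non-principal ultrafilter these stay large, and the sequence is injective.
-/

open Hindman

attribute [local instance] Ultrafilter.mul Ultrafilter.semigroup

open Filter Function

namespace Stream'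

theorem drop_corec {α β : Type*} (f : α → β) (g : α → α) (a : α) (n : ℕ) :
    (corec f g a).drop n = corec f g (g^[n] a) := by
  induction n generalizing a with
  | zero => rfl
  | succ n ih => rw [drop_succ, corec_eq, tail_cons, ih, iterate_succ_apply]

end Stream'

namespace Ultrafilter

theorem le_cofinite_iff_forall_ne_pure {α : Type*} {U : Ultrafilter α} :
    (U : Filter α) ≤ cofinite ↔ ∀ a, U ≠ pure a := by
  refine ⟨fun hU a ha => ?_, fun hU => ?_⟩
  · simpa [ha] using le_cofinite_iff_compl_singleton_mem.1 hU a
  · exact (le_cofinite_or_eq_pure U).resolve_right fun ⟨a, ha⟩ => hU a ha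

theorem isClosed_setOf_le_cofinite {α : Type*} :
    IsClosed {U : Ultrafilter α | (U : Filter α) ≤ cofinite} := by
  simp only [le_cofinite_iff_compl_singleton_mem, Set.ofPred_forall]
  exact isClosed_iInter fun x => ultrafilter_isClosed_basic _

theorem exists_le_cofinite_mem {α : Type*} {s : Set α} (hs : s.Infinite) :
    ∃ U : Ultrafilter α, (U : Filter α) ≤ cofinite ∧ s ∈ U := by
  have := hs.cofinite_inf_principal_neBot
  obtain ⟨U, hU⟩ := exists_le (cofinite ⊓ 𝓟 s)
  exact ⟨U, hU.trans inf_le_left, hU.trans inf_le_right (mem_principal_self s)⟩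

variable {M : Type*} [Mul M]

theorem mul_le_cofinite {V W : Ultrafilter M}
    (hV : ∀ᶠ m in (V : Filter M), ∀ x, {c | m * c = x}.Finite) (hW : (W : Filter M) ≤ cofinite) : (↑(V * W) : Filter M) ≤ cofinite := by
  refine le_cofinite_iff_eventually_ne.2 fun x => (eventually_mul V W _).2 ?_
  filter_upwards [hV] with m hm
  exact hW (hm x).compl_mem_cofinite

theorem exists_mem_mul_mem_of_idempotent {U : Ultrafilter M} (hUU : U * U = U) {s : Set M}
    (hs : s ∈ U) : ∃ m ∈ s, {m' | m * m' ∈ s} ∈ U :=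
  (Filter.Eventually.and hs (by rwa [← hUU] at hs : ∀ᶠ m in U, ∀ᶠ m' in U, m * m' ∈ s)).exists

end Ultrafilter

theorem finite_setOf_mul_eq_of_mem {M : Type*} [Mul M] {S' : Set M} (hfin : S'ᶜ.Finite)
    (hcanc : ∀ a ∈ S', ∀ b ∈ S', ∀ b' ∈ S', a * b = a * b' → b = b') {m : M} (hm : m ∈ S')
    (x : M) : {c | m * c = x}.Finite := by
  have hS' : (S' ∩ {c | m * c = x}).Subsingleton := fun c hc c' hc' =>
    hcanc m hm c hc.1 c' hc'.1 (hc.2.trans hc'.2.symm)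
  refine (hfin.union hS'.finite).subset fun c hc => ?_
  by_cases h : c ∈ S'
  exacts [Or.inr ⟨h, hc⟩, Or.inl h]

namespace Hindman

variable {M : Type*} [Semigroup M]

theorem infinite_FP_of_injective {a : Stream' M} (ha : Injective a) : (FP a).Infinite :=
  Set.infinite_of_injective_forall_mem ha (FP.singleton a)

theorem injective_of_forall_head_notMem_FP_tail {a : Stream' M}
    (h : ∀ n, (a.drop n).head ∉ FP (a.drop n).tail) : Injective a := by
  refine Injective.of_lt_imp_ne fun i j hij heq => h i ?_
  obtain ⟨k, rfl⟩ := Nat.exists_eq_add_of_lt hij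
  have := FP.singleton (a.drop i).tail k
  rw [Stream'.head_drop, show a.get i = a.get (i + k + 1) from heq]
  simpa [Stream'.get_drop, add_right_comm] using this

theorem FP_drop_mem_mul {U V : Ultrafilter M} {a : Stream' M} (hU : ∀ n, FP (a.drop n) ∈ U)
    (hV : ∀ n, FP (a.drop n) ∈ V) (n : ℕ) : FP (a.drop n) ∈ U * V := by
  rw [← Ultrafilter.mem_coe, ← eventually_mem_set, Ultrafilter.eventually_mul]
  filter_upwards [hU n] with m hm
  obtain ⟨n', hn⟩ := FP.mul hm
  filter_upwards [hV (n + n')] with m' hm'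
  exact hn _ (by rwa [Stream'.drop_drop])

theorem exists_idempotent_le_cofinite_FP_mem
    (hmul : ∀ V W : Ultrafilter M, (V : Filter M) ≤ cofinite → (W : Filter M) ≤ cofinite →
      (↑(V * W) : Filter M) ≤ cofinite)
    {a : Stream' M} (ha : Injective a) :
    ∃ U : Ultrafilter M, U * U = U ∧ (U : Filter M) ≤ cofinite ∧ FP a ∈ U := by
  let C : ℕ → Set (Ultrafilter M) := fun n =>
    {V | FP (a.drop n) ∈ V} ∩ {V | (V : Filter M) ≤ cofinite}
  have hC : ∀ n, IsClosed (C n) := fun n =>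
    (ultrafilter_isClosed_basic _).inter Ultrafilter.isClosed_setOf_le_cofinite
  have hne : (⋂ n, C n).Nonempty := by
    refine IsCompact.nonempty_iInter_of_sequence_nonempty_isCompact_isClosed C
      (fun n V hV => ⟨?_, hV.2⟩) (fun n => ?_) (hC 0).isCompact hC
    · have : FP (a.drop (n + 1)) ⊆ FP (a.drop n) := by
        rw [← Stream'.drop_drop]; exact FP_drop_subset_FP _ 1
      exact mem_of_superset hV.1 this
    · have had : Injective (a.drop n) := fun i j h => Nat.add_right_cancel (ha h)
      exact (Ultrafilter.exists_le_cofinite_mem (infinite_FP_of_injective had)).imp fun V hV => ⟨hV.2, hV.1⟩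
  obtain ⟨U, hU, hUU⟩ := exists_idempotent_in_compact_subsemigroup Ultrafilter.continuous_mul_left
    (⋂ n, C n) hne (isClosed_iInter hC).isCompact fun U hU V hV => by
      simp only [C, Set.mem_iInter, Set.mem_inter_iff, Set.mem_ofPred_eq, forall_and] at hU hV ⊢
      exact ⟨FP_drop_mem_mul hU.1 hV.1, fun _ => hmul U V (hU.2 0) (hV.2 0)⟩
  obtain ⟨haU, hU⟩ := Set.mem_iInter.1 hU 0
  exact ⟨U, hUU, hU, haU⟩

theorem exists_injective_FP_subset_of_idempotent {U : Ultrafilter M} (hUU : U * U = U)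
    (hU : (U : Filter M) ≤ cofinite) {s : Set M} (hs : s ∈ U) :
    ∃ a : Stream' M, Injective a ∧ FP a ⊆ s := by
  choose elem helem hmul using fun p : {s // s ∈ U} =>
    Ultrafilter.exists_mem_mul_mem_of_idempotent hUU p.2
  let next (p : {s // s ∈ U}) : {s // s ∈ U} :=
    ⟨p.1 ∩ {m | elem p * m ∈ p.1} ∩ {elem p}ᶜ,
      inter_mem (inter_mem p.2 (hmul p)) (le_cofinite_iff_compl_singleton_mem.1 hU _)⟩
  have tail_corec (p) : (Stream'.corec elem next p).tail = Stream'.corec elem next (next p) := by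
    rw [Stream'.corec_eq, Stream'.tail_cons]
  have hFP (p) : FP (Stream'.corec elem next p) ⊆ p.1 := by
    suffices ∀ b : Stream' M, ∀ m ∈ FP b, ∀ p, b = Stream'.corec elem next p → m ∈ p.1 from
      fun m hm => this _ m hm p rfl
    intro b m hm
    induction hm with
    | head' b => rintro p rfl; exact helem p
    | tail' b m _ ih => rintro p rfl; exact (ih (next p) (tail_corec p)).1.1
    | cons' b m _ ih => rintro p rfl; exact (ih (next p) (tail_corec p)).1.2
  refine ⟨Stream'.corec elem next ⟨s, hs⟩, injective_of_forall_head_notMem_FP_tail fun n => ?_,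
    hFP _⟩
  rw [Stream'.drop_corec, Stream'.corec_eq]
  exact fun h => (hFP _ h).2 rfl

end Hindman

theorem FP_subset_iff_mem_nonprincipal_idempotent_general {S : Type*} [Semigroup S]
    (S' : Set S)
    (hfin : (S'ᶜ : Set S).Finite)
    (hcanc : ∀ a ∈ S', ∀ b ∈ S', ∀ b' ∈ S', a * b = a * b' → b = b')
    (A : Set S) :
    (∃ a : Stream' S, Function.Injective a ∧ FP a ⊆ A) ↔
    (∃ U : Ultrafilter S, U * U = U ∧ (∀ s : S, U ≠ pure s) ∧ A ∈ U) := by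
  simp only [← Ultrafilter.le_cofinite_iff_forall_ne_pure]
  constructor
  · rintro ⟨a, ha, haA⟩
    have hmul (V W : Ultrafilter S) (hV : (V : Filter S) ≤ cofinite) :
        (W : Filter S) ≤ cofinite → (↑(V * W) : Filter S) ≤ cofinite :=
      Ultrafilter.mul_le_cofinite <| mem_of_superset (hV (mem_cofinite.2 hfin)) fun _ hm =>
        finite_setOf_mul_eq_of_mem hfin hcanc hm
    obtain ⟨U, hUU, hU, haU⟩ := exists_idempotent_le_cofinite_FP_mem hmul ha
    exact ⟨U, hUU, hU, mem_of_superset haU haA⟩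
  · rintro ⟨U, hUU, hU, hA⟩
    exact exists_injective_FP_subset_of_idempotent hUU hU hA

/-- Let (S, ⋆) be a semigroup with a sub-semigroup S' whose complement is
finite and whose elements are left cancellable within S'. Then for A ⊆ S the following
are equivalent: (1) FP(aₙ) ⊆ A for some injective sequence (aₙ) in S;
(2) A ∈ 𝒰 for some non-principal idempotent ultrafilter 𝒰 = 𝒰 ⋆ 𝒰 on S. -/
theorem FP_subset_iff_mem_nonprincipal_idempotent {S : Type*} [Semigroup S]
    (S' : Set S) (hsub : ∀ a ∈ S', ∀ b ∈ S', a * b ∈ S')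
    (hfin : (S'ᶜ : Set S).Finite)
    (hcanc : ∀ a ∈ S', ∀ b ∈ S', ∀ b' ∈ S', a * b = a * b' → b = b')
    (A : Set S) :
    (∃ a : Stream' S, Function.Injective a ∧ FP a ⊆ A) ↔
    (∃ U : Ultrafilter S, U * U = U ∧ (∀ s : S, U ≠ pure s) ∧ A ∈ U) :=
  FP_subset_iff_mem_nonprincipal_idempotent_general S' hfin hcanc A
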